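/- Multiple Bernoulli polynomials satisfy B_{r,r}(z | (ω, η)) + B_{r,r}(z | (ω, -η)) = -r · B_{r-1,r-1}(z | ω), where (ω, ±η) denotes the (r)-tuple obtained by appending ±η to the (r-1)-tuple ω. -/

import Mathlib

open Complex

/-- The multiple Bernoulli polynomial `B_{r,n}(z|ω)`, defined by the generating function
`t^r e^{zt} / ∏ᵢ (e^{ωᵢ t} - 1) = ∑ₙ B_{r,n}(z|ω) tⁿ/n!`; equivalently, via the expansion
`e^{zt} ∏ᵢ t/(e^{ωᵢt}-1)` in terms of the ordinary Bernoulli numbers. -/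
noncomputable def multBernoulli (r n : ℕ) (z : ℂ) (ω : Fin r → ℂ) : ℂ :=
  (n.factorial : ℂ) * ∑ k ∈ Finset.Nat.antidiagonalTuple (r+1) n,
    z ^ k 0 / ((k 0).factorial : ℂ) *
      ∏ i : Fin r,
        ((bernoulli (k i.succ) : ℚ) : ℂ) * ω i ^ ((k i.succ : ℤ) - 1) /
          ((k i.succ).factorial : ℂ)

/-!
Pair the two expansions term by term. Writing the generating function of `B_{r+1,·}` as
`e^{zt} ∏ᵢ t/(e^{ωᵢt}-1)` times `t/(e^{ηt}-1)`, the coefficients `Bₘ ηᵐ⁻¹/m!` of the last factor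
cancel against those for `-η` except at `m = 1`, where `B₁ = -1/2` makes them add up to `-1`
(for even `m` the power of `η` is odd, and for odd `m > 1` the Bernoulli number vanishes).
Only the tuples whose last index is `1` survive, and dropping that index leaves exactly the
tuples of `B_{r,r}(z|ω)`; the factorials `(r+1)!` and `r!` account for the factor `r+1`.
-/

/-- The coefficient of `tᵐ` in `t/(e^{wt}-1)`. -/
noncomputable def bernoulliWeight (m : ℕ) (w : ℂ) : ℂ :=
  ((bernoulli m : ℚ) : ℂ) * w ^ ((m : ℤ) - 1) / (m.factorial : ℂ)

noncomputable def multBernoulliTerm {r : ℕ} (z : ℂ) (ω : Fin r → ℂ) (k : Fin (r + 1) → ℕ) : ℂ :=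
  z ^ k 0 / ((k 0).factorial : ℂ) * ∏ i : Fin r, bernoulliWeight (k i.succ) (ω i)

lemma multBernoulli_eq_sum_multBernoulliTerm (r n : ℕ) (z : ℂ) (ω : Fin r → ℂ) :
    multBernoulli r n z ω =
      (n.factorial : ℂ) * ∑ k ∈ Finset.Nat.antidiagonalTuple (r + 1) n, multBernoulliTerm z ω k :=
  rfl

lemma bernoulliWeight_add_bernoulliWeight_neg (m : ℕ) (w : ℂ) :
    bernoulliWeight m w + bernoulliWeight m (-w) = if m = 1 then -1 else 0 := by
  unfold bernoulliWeight
  rcases eq_or_ne m 1 with rfl | hm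
  · simp [bernoulli_one]
  rw [if_neg hm]
  rcases Nat.even_or_odd m with he | ho
  · have hodd : Odd ((m : ℤ) - 1) := Even.sub_odd (by exact_mod_cast he) odd_one
    rw [hodd.neg_zpow]
    ring
  · have hB : bernoulli m = 0 := by
      rw [bernoulli, bernoulli'_eq_zero_of_odd ho (lt_of_le_of_ne ho.pos hm.symm), mul_zero]
    simp [hB]

lemma multBernoulliTerm_snoc {r : ℕ} (z w : ℂ) (ω : Fin r → ℂ) (k : Fin (r + 2) → ℕ) :
    multBernoulliTerm z (Fin.snoc ω w) k =
      multBernoulliTerm z ω (Fin.init k) * bernoulliWeight (k (Fin.last (r + 1))) w := by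
  simp only [multBernoulliTerm, Fin.prod_univ_castSucc, Fin.snoc_castSucc, Fin.snoc_last,
    Fin.succ_last, Fin.init, Fin.castSucc_zero, ← Fin.succ_castSucc]
  ring

lemma Finset.Nat.sum_antidiagonalTuple_ite_last_eq {M : Type*} [AddCommMonoid M] (n N j : ℕ)
    (f : (Fin n → ℕ) → M) :
    ∑ k ∈ Finset.Nat.antidiagonalTuple (n + 1) (N + j),
        (if k (Fin.last n) = j then f (Fin.init k) else 0) =
      ∑ m ∈ Finset.Nat.antidiagonalTuple n N, f m := by
  rw [← Finset.sum_filter]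
  refine Finset.sum_nbij' Fin.init (fun m => Fin.snoc m j) ?_ ?_ ?_ ?_ (fun _ _ => rfl)
  · intro k hk
    rw [Finset.mem_filter, mem_antidiagonalTuple, Fin.sum_univ_castSucc] at hk
    rw [mem_antidiagonalTuple]
    exact Nat.add_right_cancel (hk.2 ▸ hk.1)
  · intro m hm
    rw [mem_antidiagonalTuple] at hm
    rw [Finset.mem_filter, mem_antidiagonalTuple, Fin.sum_univ_castSucc]
    simp only [Fin.snoc_castSucc, Fin.snoc_last, hm, and_self]
  · intro k hk
    rw [Finset.mem_filter] at hk
    simpa [hk.2] using Fin.snoc_init_self k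
  · intro m _
    exact Fin.init_snoc _ _

/-- `B_{r,r}(z | (ω, η)) + B_{r,r}(z | (ω, -η)) = -r ⬝ B_{r-1,r-1}(z | ω)`. -/
theorem stmt16 (r : ℕ) (z η : ℂ) (ω : Fin r → ℂ) :
    multBernoulli (r+1) (r+1) z (Fin.snoc ω η) +
        multBernoulli (r+1) (r+1) z (Fin.snoc ω (-η)) =
      -((r : ℂ) + 1) * multBernoulli r r z ω := by
  have paired : ∀ k : Fin (r + 2) → ℕ,
      multBernoulliTerm z (Fin.snoc ω η) k + multBernoulliTerm z (Fin.snoc ω (-η)) k =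
        if k (Fin.last (r + 1)) = 1 then -multBernoulliTerm z ω (Fin.init k) else 0 := by
    intro k
    rw [multBernoulliTerm_snoc, multBernoulliTerm_snoc, ← mul_add,
      bernoulliWeight_add_bernoulliWeight_neg]
    split_ifs <;> ring
  simp only [multBernoulli_eq_sum_multBernoulliTerm, ← mul_add, ← Finset.sum_add_distrib,
    paired]
  rw [Finset.Nat.sum_antidiagonalTuple_ite_last_eq (r + 1) r 1 (fun m => -multBernoulliTerm z ω m),
    Finset.sum_neg_distrib, Nat.factorial_succ]
  push_cast
  ring
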